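/- Let (V, E, s, t, G, M, ℓ) be a tropical curve datum, and let G' be a finitely generated abelian group with a sharp, saturated, generating submonoid M' ⊆ G'. Let u : G → G' be a group homomorphism with u(M) ⊆ M' and u(ℓ(e)) ≠ 0 for every e ∈ E. Then postcomposition with u sends bounded-monodromy homomorphisms H₁ → G (with respect to M, ℓ) to bounded-monodromy homomorphisms H₁ → G' (with respect to M', u∘ℓ), sends ⟨γ, −⟩_ℓ to ⟨γ, −⟩_{u∘ℓ}, and hence induces a group homomorphism TroPic⁰(𝔛/M) → TroPic⁰(𝔛/M'); the kernel of this induced homomorphism is a free abelian group. -/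

import Mathlib

namespace TropicalNeron

variable {V E : Type*} [Fintype E]
variable {G : Type*} [AddCommGroup G]

open scoped Classical in
/-- The boundary map `δ : (E → ℤ) → (V → ℤ)` of a graph with source `s` and target `t`. -/
noncomputable def delta (s t : E → V) : (E → ℤ) →+ (V → ℤ) where
  toFun f := fun v => (∑ e, if t e = v then f e else 0) - ∑ e, if s e = v then f e else 0
  map_zero' := by funext v; simp
  map_add' f g := by
    classical
    funext v
    have h : ∀ w : E → V,
        (∑ e, if w e = v then (f + g) e else 0)
          = (∑ e, if w e = v then f e else 0) + ∑ e, if w e = v then g e else 0 := by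
      intro w
      rw [← Finset.sum_add_distrib]
      refine Finset.sum_congr rfl fun e _ => ?_
      by_cases hw : w e = v <;> simp [hw]
    simp only [Pi.add_apply] at *
    rw [h, h]
    ring

/-- The first homology of the graph: the kernel of the boundary map. -/
noncomputable def H1 (s t : E → V) : AddSubgroup (E → ℤ) := (delta s t).ker

/-- The monodromy pairing `⟨γ, γ'⟩ = ∑ e, γ(e)·γ'(e) • ℓ(e)`. -/
def pairing (ℓ : E → G) (γ γ' : E → ℤ) : G := ∑ e, (γ e * γ' e) • ℓ e

/-- Pairing with a fixed cycle `γ`, as a homomorphism `H₁ → G`. -/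
noncomputable def periodHom (s t : E → V) (ℓ : E → G) (γ : H1 s t) : ↥(H1 s t) →+ G where
  toFun γ' := pairing ℓ γ γ'
  map_zero' := by simp [pairing]
  map_add' γ₁ γ₂ := by
    simp only [pairing, AddSubgroup.coe_add, Pi.add_apply, mul_add, add_smul]
    rw [Finset.sum_add_distrib]

/-- The period map `H₁ → Hom(H₁, G)`, `γ ↦ ⟨γ, −⟩`. -/
noncomputable def periodMap (s t : E → V) (ℓ : E → G) : ↥(H1 s t) →+ (↥(H1 s t) →+ G) where
  toFun := periodHom s t ℓ
  map_zero' := by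
    ext γ'
    simp [periodHom, pairing]
  map_add' γ₁ γ₂ := by
    ext γ'
    simp only [periodHom, AddMonoidHom.coe_mk, ZeroHom.coe_mk, AddMonoidHom.add_apply,
      pairing, AddSubgroup.coe_add, Pi.add_apply, add_mul, add_smul]
    rw [Finset.sum_add_distrib]

/-- `a` is bounded by `b` for the order `x ≤ y ↔ y - x ∈ M`. -/
def Bounded (M : AddSubmonoid G) (b a : G) : Prop :=
  ∃ n m : ℤ, a - n • b ∈ M ∧ m • b - a ∈ M

/-- A homomorphism `φ : H₁ → G` has bounded monodromy if `φ(γ)` is bounded by `⟨γ,γ⟩`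
for every `γ ∈ H₁`. -/
def BoundedMonodromy (s t : E → V) (M : AddSubmonoid G) (ℓ : E → G)
    (φ : ↥(H1 s t) →+ G) : Prop :=
  ∀ γ : H1 s t, Bounded M (pairing ℓ γ γ) (φ γ)

/-- The subgroup `Hom(H₁,G)† ⊆ Hom(H₁,G)` of bounded-monodromy homomorphisms. -/
noncomputable def BMHom (s t : E → V) (M : AddSubmonoid G) (ℓ : E → G) :
    AddSubgroup (↥(H1 s t) →+ G) where
  carrier := {φ | BoundedMonodromy s t M ℓ φ}
  zero_mem' := fun γ => ⟨0, 0, by simpa using M.zero_mem, by simpa using M.zero_mem⟩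
  add_mem' := by
    rintro φ ψ hφ hψ γ
    obtain ⟨n, m, h1, h2⟩ := hφ γ
    obtain ⟨n', m', h1', h2'⟩ := hψ γ
    refine ⟨n + n', m + m', ?_, ?_⟩
    · have h := AddSubmonoid.add_mem _ h1 h1'
      have e : φ γ - n • pairing ℓ γ γ + (ψ γ - n' • pairing ℓ γ γ)
          = (φ + ψ) γ - (n + n') • pairing ℓ γ γ := by
        rw [AddMonoidHom.add_apply, add_smul]; abel
      rwa [e] at h
    · have h := AddSubmonoid.add_mem _ h2 h2'
      have e : m • pairing ℓ γ γ - φ γ + (m' • pairing ℓ γ γ - ψ γ)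
          = (m + m') • pairing ℓ γ γ - (φ + ψ) γ := by
        rw [AddMonoidHom.add_apply, add_smul]; abel
      rwa [e] at h
  neg_mem' := by
    rintro φ hφ γ
    obtain ⟨n, m, h1, h2⟩ := hφ γ
    refine ⟨-m, -n, ?_, ?_⟩
    · have e : m • pairing ℓ γ γ - φ γ = (-φ) γ - (-m) • pairing ℓ γ γ := by
        rw [AddMonoidHom.neg_apply, neg_smul]; abel
      rwa [e] at h2
    · have e : φ γ - n • pairing ℓ γ γ = (-n) • pairing ℓ γ γ - (-φ) γ := by
        rw [AddMonoidHom.neg_apply, neg_smul]; abel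
      rwa [e] at h1

/-- The subgroup of `Hom(H₁,G)†` of homomorphisms of the form `⟨γ, −⟩`. -/
noncomputable def periods (s t : E → V) (M : AddSubmonoid G) (ℓ : E → G) :
    AddSubgroup ↥(BMHom s t M ℓ) :=
  AddSubgroup.comap (BMHom s t M ℓ).subtype (periodMap s t ℓ).range

/-- The tropical Jacobian `TroPic⁰ = Hom(H₁,G)† / {⟨γ,−⟩ : γ ∈ H₁}`. -/
noncomputable abbrev TroPic0 (s t : E → V) (M : AddSubmonoid G) (ℓ : E → G) :=
  ↥(BMHom s t M ℓ) ⧸ periods s t M ℓ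

/-- The standard hypotheses on a tropical curve datum: `M` is a sharp, saturated,
generating submonoid of `G`, and all edge lengths lie in `M` and are nonzero. -/
def IsTropicalCurveDatum (s t : E → V) (M : AddSubmonoid G) (ℓ : E → G) : Prop :=
  (∀ g ∈ M, -g ∈ M → g = 0) ∧
  (∀ (g : G) (n : ℕ), 1 ≤ n → (n : ℤ) • g ∈ M → g ∈ M) ∧
  (∀ g : G, ∃ a ∈ M, ∃ b ∈ M, g = a - b) ∧
  (∀ e, ℓ e ∈ M) ∧
  (∀ e, ℓ e ≠ 0)

/-- `F` is the homomorphism of tropical Jacobians induced by postcomposition with `u`. -/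
def IsInducedMap {V E : Type*} [Fintype E] {G G' : Type*} [AddCommGroup G] [AddCommGroup G']
    (s t : E → V) (M : AddSubmonoid G) (ℓ : E → G) (M' : AddSubmonoid G') (ℓ' : E → G')
    (u : G →+ G') (F : TroPic0 s t M ℓ →+ TroPic0 s t M' ℓ') : Prop :=
  ∀ (φ : ↥(BMHom s t M ℓ)) (ψ : ↥(BMHom s t M' ℓ')),
    (ψ : ↥(H1 s t) →+ G') = u.comp (φ : ↥(H1 s t) →+ G) →
    F (QuotientAddGroup.mk φ) = QuotientAddGroup.mk ψ

/-!
Postcomposition with `u` is monotone and linear, so it preserves bounded monodromy and periods and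
descends to the Jacobians. As `TroPic⁰` is finitely generated, freeness of the kernel reduces to
torsion-freeness. If `[φ]` lies in the kernel and `c • [φ] = 0` with `c ≠ 0`, then `u ∘ φ = ⟨γ', −⟩`
and `c • φ = ⟨γ, −⟩`; applying `u` gives `⟨γ - c • γ', −⟩_{u∘ℓ} = 0`. Since `M'` is sharp and `u`
contracts no edge, the pairing `⟨δ, δ⟩_{u∘ℓ}` vanishes only for `δ = 0`, so `γ = c • γ'`.
Finally `G` is torsion-free (`M` is sharp and saturated), hence `φ = ⟨γ', −⟩`.
-/

section SharpMonoid

variable {M : AddSubmonoid G}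

lemma eq_zero_of_add_eq_zero_of_sharp (hsharp : ∀ g ∈ M, -g ∈ M → g = 0) {x y : G}
    (hx : x ∈ M) (hy : y ∈ M) (h : x + y = 0) : x = 0 :=
  hsharp x hx (by rwa [neg_eq_of_add_eq_zero_right h])

lemma eq_zero_of_sum_eq_zero_of_sharp (hsharp : ∀ g ∈ M, -g ∈ M → g = 0) {f : E → G}
    (hf : ∀ e, f e ∈ M) (h : ∑ e, f e = 0) (e : E) : f e = 0 := by
  classical
  refine eq_zero_of_add_eq_zero_of_sharp hsharp (hf e)
    (AddSubmonoid.sum_mem _ (t := Finset.univ.erase e) fun e' _ => hf e') ?_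
  rwa [Finset.add_sum_erase _ _ (Finset.mem_univ e)]

lemma eq_zero_of_nsmul_eq_zero_of_sharp (hsharp : ∀ g ∈ M, -g ∈ M → g = 0) {x : G} {n : ℕ}
    (hn : n ≠ 0) (hx : x ∈ M) (h : n • x = 0) : x = 0 := by
  obtain ⟨k, rfl⟩ := Nat.exists_eq_succ_of_ne_zero hn
  exact eq_zero_of_add_eq_zero_of_sharp hsharp hx (AddSubmonoid.nsmul_mem _ hx k)
    (by rwa [← succ_nsmul'])

lemma isAddTorsionFree_of_sharp_of_saturated (hsharp : ∀ g ∈ M, -g ∈ M → g = 0)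
    (hsat : ∀ (g : G) (n : ℕ), 1 ≤ n → (n : ℤ) • g ∈ M → g ∈ M) : IsAddTorsionFree G := by
  refine ⟨fun n hn a b hab => ?_⟩
  have hmem : ∀ {x : G}, n • x = 0 → x ∈ M := fun hx =>
    hsat _ n (Nat.one_le_iff_ne_zero.mpr hn) (by rw [natCast_zsmul, hx]; exact M.zero_mem)
  have hab' : n • (a - b) = 0 := by rw [nsmul_sub, sub_eq_zero]; exact hab
  have hba' : n • -(a - b) = 0 := by rw [smul_neg, hab', neg_zero]
  exact sub_eq_zero.mp (hsharp _ (hmem hab') (hmem hba'))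

end SharpMonoid

instance isAddTorsionFree_addMonoidHom {A B : Type*} [AddMonoid A] [AddCommMonoid B]
    [IsAddTorsionFree B] : IsAddTorsionFree (A →+ B) :=
  Function.Injective.isAddTorsionFree (AddMonoidHom.coeFn A B) DFunLike.coe_injective

lemma pairing_map {G' : Type*} [AddCommGroup G'] (u : G →+ G') (ℓ : E → G) (γ γ' : E → ℤ) :
    pairing (fun e => u (ℓ e)) γ γ' = u (pairing ℓ γ γ') := by
  simp [pairing, map_sum, map_zsmul]

lemma eq_zero_of_pairing_self_eq_zero {M : AddSubmonoid G} (hsharp : ∀ g ∈ M, -g ∈ M → g = 0)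
    {ℓ : E → G} (hℓ : ∀ e, ℓ e ∈ M) (hne : ∀ e, ℓ e ≠ 0) {γ : E → ℤ}
    (h : pairing ℓ γ γ = 0) : γ = 0 := by
  have hterm (e : E) : (γ e * γ e) • ℓ e = (γ e).natAbs ^ 2 • ℓ e := by
    rw [← Int.natAbs_mul_self, natCast_zsmul, sq]
  funext e
  by_contra hγe
  have hsum := eq_zero_of_sum_eq_zero_of_sharp hsharp
    (fun e => by rw [hterm]; exact AddSubmonoid.nsmul_mem _ (hℓ e) _) h e
  rw [hterm] at hsum
  exact hne e (eq_zero_of_nsmul_eq_zero_of_sharp hsharp (by simpa using hγe) (hℓ e) hsum)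

lemma periodMap_injective {s t : E → V} {M : AddSubmonoid G} (hsharp : ∀ g ∈ M, -g ∈ M → g = 0)
    {ℓ : E → G} (hℓ : ∀ e, ℓ e ∈ M) (hne : ∀ e, ℓ e ≠ 0) :
    Function.Injective (periodMap s t ℓ) := by
  refine (injective_iff_map_eq_zero _).mpr fun γ hγ => Subtype.ext ?_
  exact eq_zero_of_pairing_self_eq_zero hsharp hℓ hne (DFunLike.congr_fun hγ γ)

section InducedMap

variable {G' : Type*} [AddCommGroup G'] {s t : E → V} {M : AddSubmonoid G} {ℓ : E → G}
  {M' : AddSubmonoid G'} (u : G →+ G')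

lemma Bounded.map (hu : ∀ x ∈ M, u x ∈ M') {a b : G} (h : Bounded M b a) :
    Bounded M' (u b) (u a) := by
  obtain ⟨n, m, hn, hm⟩ := h
  exact ⟨n, m, by simpa using hu _ hn, by simpa using hu _ hm⟩

lemma BoundedMonodromy.comp (hu : ∀ x ∈ M, u x ∈ M') {φ : ↥(H1 s t) →+ G}
    (hφ : BoundedMonodromy s t M ℓ φ) :
    BoundedMonodromy s t M' (fun e => u (ℓ e)) (u.comp φ) := fun γ => by
  simpa only [pairing_map, AddMonoidHom.comp_apply] using (hφ γ).map u hu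

lemma comp_periodHom (γ : H1 s t) :
    u.comp (periodHom s t ℓ γ) = periodHom s t (fun e => u (ℓ e)) γ := by
  ext γ'
  simp [periodHom, pairing_map]

lemma mem_periods_iff {φ : BMHom s t M ℓ} :
    φ ∈ periods s t M ℓ ↔ ∃ γ, periodHom s t ℓ γ = φ :=
  AddMonoidHom.mem_range

variable (s t M ℓ M')

noncomputable def bmHomMap (hu : ∀ x ∈ M, u x ∈ M') :
    BMHom s t M ℓ →+ BMHom s t M' (fun e => u (ℓ e)) :=
  ((AddMonoidHom.compHom u).comp (BMHom s t M ℓ).subtype).codRestrict _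
    fun φ => BoundedMonodromy.comp u hu φ.2

lemma periods_le_comap_bmHomMap (hu : ∀ x ∈ M, u x ∈ M') :
    periods s t M ℓ ≤ (periods s t M' fun e => u (ℓ e)).comap (bmHomMap s t M ℓ M' u hu) := by
  rintro φ hφ
  obtain ⟨γ, hγ⟩ := mem_periods_iff.mp hφ
  refine mem_periods_iff.mpr ⟨γ, ?_⟩
  rw [← comp_periodHom, hγ]
  rfl

noncomputable def troPicMap (hu : ∀ x ∈ M, u x ∈ M') :
    TroPic0 s t M ℓ →+ TroPic0 s t M' fun e => u (ℓ e) :=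
  QuotientAddGroup.map _ _ (bmHomMap s t M ℓ M' u hu) (periods_le_comap_bmHomMap s t M ℓ M' u hu)

lemma isInducedMap_troPicMap (hu : ∀ x ∈ M, u x ∈ M') :
    IsInducedMap s t M ℓ M' (fun e => u (ℓ e)) u (troPicMap s t M ℓ M' u hu) := by
  intro φ ψ h
  rw [troPicMap, QuotientAddGroup.map_mk]
  congr 1
  exact Subtype.ext h.symm

end InducedMap

section FreeKernel

variable {G' : Type*} [AddCommGroup G'] {s t : E → V} {M : AddSubmonoid G} {ℓ : E → G}
  {M' : AddSubmonoid G'} (u : G →+ G')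

lemma eq_periodHom_of_zsmul_eq_periodHom [IsAddTorsionFree G]
    (hinj : Function.Injective (periodMap s t fun e => u (ℓ e)))
    {φ : ↥(H1 s t) →+ G} {c : ℤ} (hc : c ≠ 0) {γ γ' : H1 s t}
    (hγ : periodHom s t ℓ γ = c • φ)
    (hγ' : periodHom s t (fun e => u (ℓ e)) γ' = u.comp φ) :
    φ = periodHom s t ℓ γ' := by
  have hγc : γ = c • γ' := hinj <| by
    change periodHom s t _ γ = periodMap s t _ (c • γ')
    rw [map_zsmul, ← comp_periodHom, hγ]
    change u.comp (c • φ) = c • periodHom s t _ γ'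
    rw [hγ']
    ext
    simp
  refine zsmul_right_injective hc (?_ : c • φ = c • periodHom s t ℓ γ')
  rw [← hγ, hγc]
  exact map_zsmul (periodMap s t ℓ) c γ'

lemma isTorsionFree_ker_troPicMap [IsAddTorsionFree G] (hu : ∀ x ∈ M, u x ∈ M')
    (hinj : Function.Injective (periodMap s t fun e => u (ℓ e))) :
    Module.IsTorsionFree ℤ (troPicMap s t M ℓ M' u hu).ker := by
  refine .of_smul_eq_zero fun c x hcx => or_iff_not_imp_left.mpr fun hc => ?_
  obtain ⟨x, hx⟩ := x
  induction x using QuotientAddGroup.induction_on with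
  | H φ => ?_
  obtain ⟨γ', hγ'⟩ := mem_periods_iff.mp <| (QuotientAddGroup.eq_zero_iff _).mp hx
  have hcφ : QuotientAddGroup.mk (s := periods s t M ℓ) (c • φ) = 0 := congrArg Subtype.val hcx
  obtain ⟨γ, hγ⟩ := mem_periods_iff.mp <| (QuotientAddGroup.eq_zero_iff _).mp hcφ
  refine Subtype.ext <| (QuotientAddGroup.eq_zero_iff _).mpr <| mem_periods_iff.mpr ⟨γ', ?_⟩
  exact (eq_periodHom_of_zsmul_eq_periodHom u hinj hc hγ hγ').symm

end FreeKernel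

instance moduleFinite_addSubgroup {A : Type*} [AddCommGroup A] [Module.Finite ℤ A]
    (H : AddSubgroup A) : Module.Finite ℤ H :=
  Module.Finite.iff_fg.mpr (IsNoetherian.noetherian H.toIntSubmodule)

lemma moduleFinite_troPic0 [Module.Finite ℤ G] (s t : E → V) (M : AddSubmonoid G) (ℓ : E → G) :
    Module.Finite ℤ (TroPic0 s t M ℓ) := by
  have : Module.Finite ℤ (↥(H1 s t) →+ G) := Module.Finite.equiv (addMonoidHomLequivInt ℤ).symm
  exact Module.Finite.of_surjective (QuotientAddGroup.mk' _).toIntLinearMap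
    (QuotientAddGroup.mk'_surjective _)

theorem induced_map_free_kernel_general {V E : Type*} [Fintype E]
    {G G' : Type*} [AddCommGroup G] [AddCommGroup G']
    (s t : E → V) (M : AddSubmonoid G) (ℓ : E → G)
    (hG : AddGroup.FG G) (hdatum : IsTropicalCurveDatum s t M ℓ)
    (M' : AddSubmonoid G')
    (hsharp' : ∀ g ∈ M', -g ∈ M' → g = 0)
    (u : G →+ G') (hu : ∀ x ∈ M, u x ∈ M') (hne : ∀ e, u (ℓ e) ≠ 0) :
    (∀ φ : ↥(H1 s t) →+ G, BoundedMonodromy s t M ℓ φ →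
        BoundedMonodromy s t M' (fun e => u (ℓ e)) (u.comp φ)) ∧
    (∀ γ : H1 s t, u.comp (periodHom s t ℓ γ) = periodHom s t (fun e => u (ℓ e)) γ) ∧
    ∃ F : TroPic0 s t M ℓ →+ TroPic0 s t M' (fun e => u (ℓ e)),
      IsInducedMap s t M ℓ M' (fun e => u (ℓ e)) u F ∧
      Module.Free ℤ ↥F.ker := by
  obtain ⟨hsharp, hsat, -, hℓ, -⟩ := hdatum
  have : IsAddTorsionFree G := isAddTorsionFree_of_sharp_of_saturated hsharp hsat
  have : Module.Finite ℤ G := Module.Finite.iff_addGroup_fg.mpr hG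
  have := moduleFinite_troPic0 s t M ℓ
  have : Module.IsTorsionFree ℤ (troPicMap s t M ℓ M' u hu).ker :=
    isTorsionFree_ker_troPicMap u hu (periodMap_injective hsharp' (fun e => hu _ (hℓ e)) hne)
  exact ⟨fun _ => BoundedMonodromy.comp u hu, comp_periodHom u, troPicMap s t M ℓ M' u hu,
    isInducedMap_troPicMap s t M ℓ M' u hu, inferInstance⟩

/-- Lemma 6.2 of the paper: a homomorphism `u : G → G'` of monoids
(`u(M) ⊆ M'`) not contracting any edge (`u(ℓ(e)) ≠ 0`) sends bounded-monodromy
homomorphisms to bounded-monodromy homomorphisms, sends `⟨γ,−⟩_ℓ` to `⟨γ,−⟩_{u∘ℓ}`,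
and induces a homomorphism `TroPic⁰(𝔛/M) → TroPic⁰(𝔛/M')` with free kernel. -/
theorem induced_map_free_kernel {V E : Type*} [Fintype V] [Fintype E] [Nonempty V]
    {G G' : Type*} [AddCommGroup G] [AddCommGroup G']
    (s t : E → V) (M : AddSubmonoid G) (ℓ : E → G)
    (hG : AddGroup.FG G) (hdatum : IsTropicalCurveDatum s t M ℓ)
    (M' : AddSubmonoid G') (hG' : AddGroup.FG G')
    (hsharp' : ∀ g ∈ M', -g ∈ M' → g = 0)
    (hsat' : ∀ (g : G') (n : ℕ), 1 ≤ n → (n : ℤ) • g ∈ M' → g ∈ M')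
    (hgen' : ∀ g : G', ∃ a ∈ M', ∃ b ∈ M', g = a - b)
    (u : G →+ G') (hu : ∀ x ∈ M, u x ∈ M') (hne : ∀ e, u (ℓ e) ≠ 0) :
    (∀ φ : ↥(H1 s t) →+ G, BoundedMonodromy s t M ℓ φ →
        BoundedMonodromy s t M' (fun e => u (ℓ e)) (u.comp φ)) ∧
    (∀ γ : H1 s t, u.comp (periodHom s t ℓ γ) = periodHom s t (fun e => u (ℓ e)) γ) ∧
    ∃ F : TroPic0 s t M ℓ →+ TroPic0 s t M' (fun e => u (ℓ e)),
      IsInducedMap s t M ℓ M' (fun e => u (ℓ e)) u F ∧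
      Module.Free ℤ ↥F.ker :=
  induced_map_free_kernel_general s t M ℓ hG hdatum M' hsharp' u hu hne

end TropicalNeron
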